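/- arXiv:1410.5385 — 5 statements merged into one kernel-verified Lean document; each statement's English description precedes it below -/
import Mathlib

section
/- Let f₀, …, fₙ be non-negative integrable functions on a probability space (X, B, μ) and let B₁, …, Bₙ ⊆ B be sub-σ-algebras. Then ∫ f₀ · ∏_{i=1}^n E[f_i | B_i] dμ ≥ (∫ ∏_{i=0}^n f_i^{1/(n+1)} dμ)^{n+1}. -/
/-!
Write `Eᵢ = E[fᵢ | Bᵢ]`. Since `fᵢ = 0` a.e. on `{Eᵢ = 0}`, almost everywhere
`∏ᵢ fᵢ = (f₀ ∏ᵢ Eᵢ) · ∏ᵢ (fᵢ / Eᵢ)` in `ℝ≥0∞`. Hölder's inequality with the `n + 1` exponents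
`1 / (n + 1)` bounds `(∫ ∏ fᵢ^{1/(n+1)})^{n+1}` by `∫ f₀ ∏ Eᵢ` times the product of the
`∫ fᵢ / Eᵢ`, and each of these is at most `1`: as `1 / Eᵢ` is `Bᵢ`-measurable,
`∫ fᵢ / Eᵢ = ∫ Eᵢ / Eᵢ ≤ μ X = 1`.
-/

open MeasureTheory
open scoped ENNReal

section CondExp

variable {X : Type*} {m m0 : MeasurableSpace X} {μ : Measure X} {f : X → ℝ}

theorem lintegral_ofReal_condExp_mul (hm : m ≤ m0) [SigmaFinite (μ.trim hm)]
    (hf : Integrable f μ) (hf0 : 0 ≤ᵐ[μ] f) {g : X → ℝ≥0∞} (hg : Measurable[m] g) :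
    ∫⁻ x, ENNReal.ofReal (μ[f|m] x) * g x ∂μ = ∫⁻ x, ENNReal.ofReal (f x) * g x ∂μ := by
  have hset : ∀ s, MeasurableSet[m] s →
      ∫⁻ x in s, ENNReal.ofReal (μ[f|m] x) ∂μ = ∫⁻ x in s, ENNReal.ofReal (f x) ∂μ := by
    intro s hs
    rw [← setLIntegral_condLExp hm μ (fun x => ENNReal.ofReal (f x)) hs]
    exact lintegral_congr_ae (ae_restrict_of_ae (condLExp_ofReal m hf hf0).symm)
  have htrim : (μ.withDensity fun x => ENNReal.ofReal (μ[f|m] x)).trim hm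
      = (μ.withDensity fun x => ENNReal.ofReal (f x)).trim hm := by
    refine @Measure.ext X m _ _ fun s hs => ?_
    rw [trim_measurableSet_eq hm hs, trim_measurableSet_eq hm hs, withDensity_apply _ (hm s hs),
      withDensity_apply _ (hm s hs), hset s hs]
  have hE : Measurable fun x => ENNReal.ofReal (μ[f|m] x) :=
    (stronglyMeasurable_condExp.mono hm).measurable.ennreal_ofReal
  have hF : AEMeasurable (fun x => ENNReal.ofReal (f x)) μ := hf.1.aemeasurable.ennreal_ofReal
  have hg0 : Measurable[m0] g := hg.mono hm le_rfl
  calc ∫⁻ x, ENNReal.ofReal (μ[f|m] x) * g x ∂μ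
      = ∫⁻ x, g x ∂μ.withDensity fun x => ENNReal.ofReal (μ[f|m] x) :=
        (lintegral_withDensity_eq_lintegral_mul _ hE hg0).symm
    _ = ∫⁻ x, g x ∂(μ.withDensity fun x => ENNReal.ofReal (μ[f|m] x)).trim hm :=
        (lintegral_trim hm hg).symm
    _ = ∫⁻ x, g x ∂μ.withDensity fun x => ENNReal.ofReal (f x) := by
        rw [htrim, lintegral_trim hm hg]
    _ = ∫⁻ x, ENNReal.ofReal (f x) * g x ∂μ :=
        lintegral_withDensity_eq_lintegral_mul₀ hF hg0.aemeasurable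

theorem ae_eq_zero_of_condExp_eq_zero (hm : m ≤ m0) [SigmaFinite (μ.trim hm)]
    (hf : Integrable f μ) (hf0 : 0 ≤ᵐ[μ] f) : ∀ᵐ x ∂μ, μ[f|m] x = 0 → f x = 0 := by
  set s := {x | μ[f|m] x = 0}
  have hs : MeasurableSet[m] s := stronglyMeasurable_condExp.measurable (measurableSet_singleton 0)
  have hzero : ∫⁻ x, ENNReal.ofReal (f x) * s.indicator (fun _ => 1) x ∂μ = 0 := by
    rw [← lintegral_ofReal_condExp_mul hm hf hf0 (measurable_const.indicator hs)]
    have hpt : ∀ x, ENNReal.ofReal (μ[f|m] x) * s.indicator (fun _ => 1) x = 0 := fun x => by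
      by_cases hx : x ∈ s <;> simp_all [s]
    simp only [hpt, lintegral_zero]
  have hmeas : AEMeasurable (fun x => ENNReal.ofReal (f x) * s.indicator (fun _ => 1) x) μ :=
    hf.1.aemeasurable.ennreal_ofReal.mul (measurable_const.indicator (hm s hs)).aemeasurable
  filter_upwards [(lintegral_eq_zero_iff' hmeas).1 hzero, hf0] with x hx hx0 hEx
  have hfx : ENNReal.ofReal (f x) = 0 := by simpa [s, hEx] using hx
  exact le_antisymm (ENNReal.ofReal_eq_zero.1 hfx) hx0

theorem lintegral_ofReal_div_ofReal_condExp_le (hm : m ≤ m0) [SigmaFinite (μ.trim hm)]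
    (hf : Integrable f μ) (hf0 : 0 ≤ᵐ[μ] f) :
    ∫⁻ x, ENNReal.ofReal (f x) / ENNReal.ofReal (μ[f|m] x) ∂μ ≤ μ Set.univ := by
  have hinv : Measurable[m] fun x => (ENNReal.ofReal (μ[f|m] x))⁻¹ :=
    stronglyMeasurable_condExp.measurable.ennreal_ofReal.inv
  calc ∫⁻ x, ENNReal.ofReal (f x) / ENNReal.ofReal (μ[f|m] x) ∂μ
      = ∫⁻ x, ENNReal.ofReal (μ[f|m] x) * (ENNReal.ofReal (μ[f|m] x))⁻¹ ∂μ :=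
        (lintegral_ofReal_condExp_mul hm hf hf0 hinv).symm
    _ ≤ ∫⁻ _, 1 ∂μ := lintegral_mono fun x => ENNReal.mul_inv_le_one _
    _ = μ Set.univ := lintegral_one

end CondExp

theorem ENNReal.lintegral_prod_rpow_inv_card_pow_le {ι X : Type*} [Fintype ι] [Nonempty ι]
    [MeasurableSpace X] {μ : Measure X} {g : ι → X → ℝ≥0∞} (hg : ∀ i, AEMeasurable (g i) μ) :
    (∫⁻ x, ∏ i, g i x ^ ((Fintype.card ι : ℝ)⁻¹) ∂μ) ^ Fintype.card ι
      ≤ ∏ i, ∫⁻ x, g i x ∂μ := by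
  have hk : Fintype.card ι ≠ 0 := Fintype.card_ne_zero
  have hp : ∑ _i : ι, (Fintype.card ι : ℝ)⁻¹ = 1 := by
    rw [Finset.sum_const, Finset.card_univ, nsmul_eq_mul, mul_inv_cancel₀ (by exact_mod_cast hk)]
  calc (∫⁻ x, ∏ i, g i x ^ ((Fintype.card ι : ℝ)⁻¹) ∂μ) ^ Fintype.card ι
      ≤ (∏ i, (∫⁻ x, g i x ∂μ) ^ ((Fintype.card ι : ℝ)⁻¹)) ^ Fintype.card ι :=
        pow_le_pow_left' (ENNReal.lintegral_prod_norm_pow_le _ (fun i _ => hg i) hp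
          fun _ _ => by positivity) _
    _ = ∏ i, ∫⁻ x, g i x ∂μ := by
        rw [ENNReal.prod_rpow_of_nonneg (by positivity), ENNReal.rpow_inv_natCast_pow hk]

theorem ENNReal.ofReal_mul_ofReal_div_ofReal {b c : ℝ} (hc : 0 ≤ c) (hbc : c = 0 → b = 0) :
    ENNReal.ofReal c * (ENNReal.ofReal b / ENNReal.ofReal c) = ENNReal.ofReal b := by
  rcases hc.eq_or_lt with h | h
  · simp [← h, hbc h.symm]
  · exact ENNReal.mul_div_cancel (ENNReal.ofReal_pos.2 h).ne' ENNReal.ofReal_ne_top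

theorem ENNReal.ofReal_mul_prod_eq_mul_prod_div {ι : Type*} (s : Finset ι) {a : ℝ} {b c : ι → ℝ}
    (ha : 0 ≤ a) (hb : ∀ i ∈ s, 0 ≤ b i) (hc : ∀ i ∈ s, 0 ≤ c i)
    (hbc : ∀ i ∈ s, c i = 0 → b i = 0) :
    ENNReal.ofReal (a * ∏ i ∈ s, b i)
      = ENNReal.ofReal (a * ∏ i ∈ s, c i) *
          ∏ i ∈ s, ENNReal.ofReal (b i) / ENNReal.ofReal (c i) := by
  rw [ENNReal.ofReal_mul ha, ENNReal.ofReal_mul ha, ENNReal.ofReal_prod_of_nonneg hb,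
    ENNReal.ofReal_prod_of_nonneg hc, mul_assoc, ← Finset.prod_mul_distrib]
  exact congrArg _ (Finset.prod_congr rfl fun i hi =>
    (ENNReal.ofReal_mul_ofReal_div_ofReal (hc i hi) (hbc i hi)).symm)

/-- **Generalized Chu inequality.**  Let `f 0, …, f n` be non-negative integrable functions
on a probability space and `B 1, …, B n` sub-σ-algebras.  Then
`∫ f₀ · ∏ E[fᵢ | Bᵢ] dμ ≥ (∫ ∏ fᵢ^{1/(n+1)} dμ)^{n+1}`. -/
theorem stmt_1 {X : Type*} [m0 : MeasurableSpace X] (μ : Measure X) [IsProbabilityMeasure μ]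
    (n : ℕ) (B : Fin n → MeasurableSpace X) (hB : ∀ i, B i ≤ m0)
    (f : Fin (n + 1) → X → ℝ) (hint : ∀ i, Integrable (f i) μ)
    (hnonneg : ∀ i x, 0 ≤ f i x) :
    (∫⁻ x, ENNReal.ofReal (∏ i : Fin (n + 1), f i x ^ ((n + 1 : ℝ))⁻¹) ∂μ) ^ (n + 1)
      ≤ ∫⁻ x, ENNReal.ofReal (f 0 x * ∏ i : Fin n, (μ[f i.succ | B i]) x) ∂μ := by
  have hf0 : ∀ i, 0 ≤ᵐ[μ] f i := fun i => ae_of_all _ (hnonneg i)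
  set H : Fin n → X → ℝ := fun i => μ[f i.succ | B i]
  set G : Fin (n + 1) → X → ℝ≥0∞ := Fin.cons (fun x => ENNReal.ofReal (f 0 x * ∏ i, H i x))
    fun i x => ENNReal.ofReal (f i.succ x) / ENNReal.ofReal (H i x)
  have hH : ∀ i, Measurable (H i) := fun i => (stronglyMeasurable_condExp.mono (hB i)).measurable
  have hG : ∀ i, AEMeasurable (G i) μ := Fin.cases
    ((hint 0).1.aemeasurable.mul
      (Finset.measurable_prod _ fun i _ => hH i).aemeasurable).ennreal_ofReal
    fun i => (hint i.succ).1.aemeasurable.ennreal_ofReal.div (hH i).ennreal_ofReal.aemeasurable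
  have hG_succ : ∀ i : Fin n, ∫⁻ x, G i.succ x ∂μ ≤ 1 := fun i =>
    (lintegral_ofReal_div_ofReal_condExp_le (hB i) (hint i.succ) (hf0 i.succ)).trans_eq measure_univ
  have hprod : ∀ᵐ x ∂μ, ENNReal.ofReal (∏ i, f i x ^ ((n + 1 : ℝ))⁻¹)
      = ∏ i, G i x ^ ((n + 1 : ℝ))⁻¹ := by
    filter_upwards [ae_all_iff.2 fun i : Fin n => condExp_nonneg (m := B i) (hf0 i.succ),
      ae_all_iff.2 fun i => ae_eq_zero_of_condExp_eq_zero (hB i) (hint i.succ) (hf0 i.succ)]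
      with x hH0 hHf
    have hr : (0 : ℝ) ≤ ((n + 1 : ℝ))⁻¹ := by positivity
    rw [ENNReal.prod_rpow_of_nonneg hr, Real.finsetProd_rpow _ _ (fun i _ => hnonneg i x),
      ← ENNReal.ofReal_rpow_of_nonneg (Finset.prod_nonneg fun i _ => hnonneg i x) hr,
      Fin.prod_univ_succ, Fin.prod_univ_succ, ENNReal.ofReal_mul_prod_eq_mul_prod_div _
        (hnonneg 0 x) (fun i _ => hnonneg i.succ x) (fun i _ => hH0 i) (fun i _ => hHf i)]
    rfl
  calc (∫⁻ x, ENNReal.ofReal (∏ i, f i x ^ ((n + 1 : ℝ))⁻¹) ∂μ) ^ (n + 1)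
      = (∫⁻ x, ∏ i, G i x ^ ((Fintype.card (Fin (n + 1)) : ℝ)⁻¹) ∂μ)
          ^ Fintype.card (Fin (n + 1)) := by
        rw [lintegral_congr_ae hprod, Fintype.card_fin]; push_cast; rfl
    _ ≤ ∏ i, ∫⁻ x, G i x ∂μ := ENNReal.lintegral_prod_rpow_inv_card_pow_le hG
    _ = (∫⁻ x, G 0 x ∂μ) * ∏ i : Fin n, ∫⁻ x, G i.succ x ∂μ := Fin.prod_univ_succ _
    _ ≤ ∫⁻ x, G 0 x ∂μ := mul_le_of_le_one_right' (Finset.prod_le_one' fun i _ => hG_succ i)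
end

section
/- Let f₀, f₁, f₂ be non-negative integrable functions on a probability space and B₁, B₂ sub-σ-algebras. Then ∫ f₀ · E[f₁|B₁] · E[f₂|B₂] dμ ≥ (∫ f₀^{1/3} f₁^{1/3} f₂^{1/3} dμ)^3. -/
/-! Write `Eᵢ` for the conditional expectation of `fᵢ` given `Bᵢ`. Since `fᵢ` vanishes a.e. where
`Eᵢ` does, `f₀ f₁ f₂ = (f₀ E₁ E₂) (f₁ / E₁) (f₂ / E₂)` a.e., and Hölder's inequality with exponents
`1/3` bounds the cube of `∫ (f₀ f₁ f₂)^{1/3}` by the product of the integrals of the three factors.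
As `1 / Eᵢ` is `Bᵢ`-measurable, `∫ fᵢ / Eᵢ = ∫ Eᵢ / Eᵢ ≤ 1`. The argument is run in `ℝ≥0∞` with the
Lebesgue conditional expectation `μ⁻[·|Bᵢ]`, which agrees a.e. with `ofReal ∘ μ[·|Bᵢ]`. -/

open MeasureTheory
open scoped ENNReal

section CondLExp

variable {X : Type*} {m m0 : MeasurableSpace X} {μ : Measure X} {f : X → ℝ≥0∞}

theorem lintegral_mul_condLExp (hm : m ≤ m0) [SigmaFinite (μ.trim hm)]
    (hf : AEMeasurable f μ) {g : X → ℝ≥0∞} (hg : Measurable[m] g) :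
    ∫⁻ x, g x * μ⁻[f|m] x ∂μ = ∫⁻ x, g x * f x ∂μ := by
  have htrim : (μ.withDensity μ⁻[f|m]).trim hm = (μ.withDensity f).trim hm := by
    refine @Measure.ext X m _ _ fun s hs => ?_
    rw [trim_measurableSet_eq hm hs, trim_measurableSet_eq hm hs, withDensity_apply _ (hm s hs),
      withDensity_apply _ (hm s hs), setLIntegral_condLExp hm μ f hs]
  have hg_trim := congr_arg (fun ν => ∫⁻ x, g x ∂ν) htrim
  simp only [lintegral_trim hm hg] at hg_trim
  simp_rw [mul_comm (g _)]
  rwa [lintegral_withDensity_eq_lintegral_mul₀ (measurable_condLExp' m μ f).aemeasurable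
      (hg.mono hm le_rfl).aemeasurable,
    lintegral_withDensity_eq_lintegral_mul₀ hf (hg.mono hm le_rfl).aemeasurable] at hg_trim

theorem ae_eq_zero_of_condLExp_eq_zero (hm : m ≤ m0) [SigmaFinite (μ.trim hm)]
    (hf : AEMeasurable f μ) : ∀ᵐ x ∂μ, μ⁻[f|m] x = 0 → f x = 0 := by
  have hs : MeasurableSet[m] {x | μ⁻[f|m] x = 0} :=
    measurableSet_eq_fun (measurable_condLExp m μ f) measurable_const
  have hzero : ∫⁻ x in {x | μ⁻[f|m] x = 0}, f x ∂μ = 0 := by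
    rw [← setLIntegral_condLExp hm μ f hs]
    exact (setLIntegral_congr_fun (hm _ hs) fun x hx => hx).trans lintegral_zero
  have := (lintegral_eq_zero_iff' hf.restrict).mp hzero
  exact (ae_restrict_iff' (hm _ hs)).mp this

theorem lintegral_div_condLExp_le (hm : m ≤ m0) [SigmaFinite (μ.trim hm)]
    (hf : AEMeasurable f μ) : ∫⁻ x, f x / μ⁻[f|m] x ∂μ ≤ μ Set.univ := by
  calc ∫⁻ x, f x / μ⁻[f|m] x ∂μ = ∫⁻ x, (μ⁻[f|m] x)⁻¹ * μ⁻[f|m] x ∂μ := by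
        simp_rw [div_eq_mul_inv, mul_comm (f _)]
        exact (lintegral_mul_condLExp hm hf (measurable_condLExp m μ f).inv).symm
    _ ≤ ∫⁻ _, 1 ∂μ := lintegral_mono fun x => ENNReal.inv_mul_le_one _
    _ = μ Set.univ := lintegral_one

theorem ae_div_condLExp_mul_cancel (hm : m ≤ m0) [SigmaFinite (μ.trim hm)]
    (hf : AEMeasurable f μ) (hf_fin : ∫⁻ x, f x ∂μ ≠ ∞) :
    ∀ᵐ x ∂μ, f x / μ⁻[f|m] x * μ⁻[f|m] x = f x := by
  filter_upwards [ae_eq_zero_of_condLExp_eq_zero hm hf, condLExp_ne_top hf_fin] with x hzero htop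
  by_cases h0 : μ⁻[f|m] x = 0
  · simp [h0, hzero h0]
  · exact ENNReal.div_mul_cancel h0 htop

end CondLExp

theorem lintegral_mul_mul_rpow_inv_three_pow_le {X : Type*} [MeasurableSpace X] {μ : Measure X}
    {f g h : X → ℝ≥0∞} (hf : AEMeasurable f μ) (hg : AEMeasurable g μ) (hh : AEMeasurable h μ) :
    (∫⁻ x, (f x * g x * h x) ^ (3⁻¹ : ℝ) ∂μ) ^ 3 ≤
      (∫⁻ x, f x ∂μ) * (∫⁻ x, g x ∂μ) * ∫⁻ x, h x ∂μ := by
  have holder := ENNReal.lintegral_prod_norm_pow_le (μ := μ) Finset.univ (f := ![f, g, h])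
    (p := fun _ => 3⁻¹) (by simp [Fin.forall_fin_succ, hf, hg, hh]) (by norm_num) (by norm_num)
  simp only [Fin.prod_univ_three, Matrix.cons_val] at holder
  have cube (a : ℝ≥0∞) : (a ^ (3⁻¹ : ℝ)) ^ 3 = a := by
    exact_mod_cast ENNReal.rpow_inv_natCast_pow three_ne_zero a
  calc (∫⁻ x, (f x * g x * h x) ^ (3⁻¹ : ℝ) ∂μ) ^ 3
      = (∫⁻ x, f x ^ (3⁻¹ : ℝ) * g x ^ (3⁻¹ : ℝ) * h x ^ (3⁻¹ : ℝ) ∂μ) ^ 3 := by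
        simp_rw [ENNReal.mul_rpow_of_nonneg _ _ (by norm_num : (0 : ℝ) ≤ 3⁻¹)]
    _ ≤ ((∫⁻ x, f x ∂μ) ^ (3⁻¹ : ℝ) * (∫⁻ x, g x ∂μ) ^ (3⁻¹ : ℝ) *
          (∫⁻ x, h x ∂μ) ^ (3⁻¹ : ℝ)) ^ 3 := by gcongr
    _ = _ := by rw [mul_pow, mul_pow, cube, cube, cube]

theorem chu_inequality_lintegral {X : Type*}
    {B₁ B₂ m0 : MeasurableSpace X} {μ : Measure X} [IsProbabilityMeasure μ]
    (hB₁ : B₁ ≤ m0) (hB₂ : B₂ ≤ m0) {f₀ f₁ f₂ : X → ℝ≥0∞} (hf₀ : AEMeasurable f₀ μ)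
    (hf₁ : AEMeasurable f₁ μ) (hf₂ : AEMeasurable f₂ μ) (hf₁_fin : ∫⁻ x, f₁ x ∂μ ≠ ∞)
    (hf₂_fin : ∫⁻ x, f₂ x ∂μ ≠ ∞) :
    (∫⁻ x, (f₀ x * f₁ x * f₂ x) ^ (3⁻¹ : ℝ) ∂μ) ^ 3 ≤
      ∫⁻ x, f₀ x * μ⁻[f₁|B₁] x * μ⁻[f₂|B₂] x ∂μ := by
  set E₁ := μ⁻[f₁|B₁]
  set E₂ := μ⁻[f₂|B₂]
  have hE₁ : Measurable E₁ := measurable_condLExp' B₁ μ f₁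
  have hE₂ : Measurable E₂ := measurable_condLExp' B₂ μ f₂
  have hsplit : ∀ᵐ x ∂μ, f₀ x * f₁ x * f₂ x =
      f₀ x * E₁ x * E₂ x * (f₁ x / E₁ x) * (f₂ x / E₂ x) := by
    filter_upwards [ae_div_condLExp_mul_cancel hB₁ hf₁ hf₁_fin,
      ae_div_condLExp_mul_cancel hB₂ hf₂ hf₂_fin] with x h₁ h₂
    conv_lhs => rw [← h₁, ← h₂]
    ring
  calc (∫⁻ x, (f₀ x * f₁ x * f₂ x) ^ (3⁻¹ : ℝ) ∂μ) ^ 3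
      = (∫⁻ x, (f₀ x * E₁ x * E₂ x * (f₁ x / E₁ x) * (f₂ x / E₂ x)) ^ (3⁻¹ : ℝ) ∂μ) ^ 3 := by
        rw [lintegral_congr_ae (hsplit.mono fun x hx => by rw [hx])]
    _ ≤ (∫⁻ x, f₀ x * E₁ x * E₂ x ∂μ) * (∫⁻ x, f₁ x / E₁ x ∂μ) * ∫⁻ x, f₂ x / E₂ x ∂μ :=
        lintegral_mul_mul_rpow_inv_three_pow_le ((hf₀.mul hE₁.aemeasurable).mul hE₂.aemeasurable)
          (hf₁.div hE₁.aemeasurable) (hf₂.div hE₂.aemeasurable)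
    _ ≤ (∫⁻ x, f₀ x * E₁ x * E₂ x ∂μ) * 1 * 1 := by
        gcongr
        · simpa using lintegral_div_condLExp_le hB₁ hf₁
        · simpa using lintegral_div_condLExp_le hB₂ hf₂
    _ = ∫⁻ x, f₀ x * E₁ x * E₂ x ∂μ := by rw [mul_one, mul_one]

/-- **Chu's inequality, case n = 2.**  For non-negative integrable `f₀, f₁, f₂` on a
probability space and sub-σ-algebras `B₁, B₂`:
`∫ f₀ · E[f₁|B₁] · E[f₂|B₂] dμ ≥ (∫ f₀^{1/3} f₁^{1/3} f₂^{1/3} dμ)³`. -/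
theorem stmt_2 {X : Type*} [m0 : MeasurableSpace X] (μ : Measure X) [IsProbabilityMeasure μ]
    (B₁ B₂ : MeasurableSpace X) (hB₁ : B₁ ≤ m0) (hB₂ : B₂ ≤ m0)
    (f₀ f₁ f₂ : X → ℝ) (hint₀ : Integrable f₀ μ) (hint₁ : Integrable f₁ μ)
    (hint₂ : Integrable f₂ μ)
    (h₀ : ∀ x, 0 ≤ f₀ x) (h₁ : ∀ x, 0 ≤ f₁ x) (h₂ : ∀ x, 0 ≤ f₂ x) :
    (∫⁻ x, ENNReal.ofReal (f₀ x ^ ((3 : ℝ))⁻¹ * f₁ x ^ ((3 : ℝ))⁻¹ * f₂ x ^ ((3 : ℝ))⁻¹) ∂μ) ^ 3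
      ≤ ∫⁻ x, ENNReal.ofReal (f₀ x * (μ[f₁ | B₁]) x * (μ[f₂ | B₂]) x) ∂μ := by
  have hlhs (x : X) : ENNReal.ofReal (f₀ x ^ (3 : ℝ)⁻¹ * f₁ x ^ (3 : ℝ)⁻¹ * f₂ x ^ (3 : ℝ)⁻¹) =
      (ENNReal.ofReal (f₀ x) * ENNReal.ofReal (f₁ x) * ENNReal.ofReal (f₂ x)) ^ (3⁻¹ : ℝ) := by
    rw [← ENNReal.ofReal_mul (h₀ x), ← ENNReal.ofReal_mul (mul_nonneg (h₀ x) (h₁ x)),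
      ENNReal.ofReal_rpow_of_nonneg (mul_nonneg (mul_nonneg (h₀ x) (h₁ x)) (h₂ x)) (by norm_num),
      Real.mul_rpow (mul_nonneg (h₀ x) (h₁ x)) (h₂ x), Real.mul_rpow (h₀ x) (h₁ x)]
  have hrhs : (fun x => ENNReal.ofReal (f₀ x * (μ[f₁ | B₁]) x * (μ[f₂ | B₂]) x)) =ᵐ[μ]
      fun x => ENNReal.ofReal (f₀ x) * μ⁻[fun y => ENNReal.ofReal (f₁ y)|B₁] x *
        μ⁻[fun y => ENNReal.ofReal (f₂ y)|B₂] x := by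
    filter_upwards [condLExp_ofReal B₁ hint₁ (.of_forall h₁),
      condLExp_ofReal B₂ hint₂ (.of_forall h₂), condExp_nonneg (m := B₁) (.of_forall h₁)]
      with x hE₁ hE₂ hE₁_nonneg
    rw [hE₁, hE₂, ENNReal.ofReal_mul (mul_nonneg (h₀ x) hE₁_nonneg), ENNReal.ofReal_mul (h₀ x)]
  simp_rw [hlhs, lintegral_congr_ae hrhs]
  exact chu_inequality_lintegral hB₁ hB₂
    hint₀.aemeasurable.ennreal_ofReal hint₁.aemeasurable.ennreal_ofReal
    hint₂.aemeasurable.ennreal_ofReal hint₁.lintegral_lt_top.ne hint₂.lintegral_lt_top.ne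
end

section
/- Let G be a group and p a minimal idempotent ultrafilter on G (an idempotent belonging to a minimal right ideal of βG). Then for any A ∈ p, the set A^{-1}A = {g^{-1}h : g, h ∈ A} is right syndetic, i.e., there is a finite set F ⊆ G with (A^{-1}A)·F = G. -/
/-- The convolution of two ultrafilters on a group: `A ∈ uconv p q ↔ {g | Ag⁻¹ ∈ p} ∈ q`. -/
def uconv {G : Type*} [Group G] (p q : Ultrafilter G) : Ultrafilter G :=
  q.bind fun g => p.map fun h => h * g

/-- `p` is a minimal idempotent ultrafilter: it is idempotent and belongs to a minimal
right ideal of `(βG, *)`. -/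
def IsMinimalIdempotent {G : Type*} [Group G] (p : Ultrafilter G) : Prop :=
  uconv p p = p ∧
    ∃ I : Set (Ultrafilter G), p ∈ I ∧ (∀ q ∈ I, ∀ r, uconv q r ∈ I) ∧
      ∀ J : Set (Ultrafilter G), J.Nonempty → J ⊆ I →
        (∀ q ∈ J, ∀ r, uconv q r ∈ J) → J = I

/-!
Let `I` be the minimal right ideal containing `p`. For every ultrafilter `q` the right ideal
`p * q * βG` lies in `I`, hence equals it, so `p = p * (q * r)` for some `r`. Reading `A ∈ p * (q * r)`
off the definition of convolution gives some `g` with `T g⁻¹ ∈ q`, where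
`T = {g | A g⁻¹ ∈ p} ⊆ A⁻¹A`. Thus the sets `T g⁻¹` meet every ultrafilter, and compactness of
`βG` gives finitely many of them covering `G`.
-/

theorem Ultrafilter.exists_finset_iUnion_eq_univ {α ι : Type*} (U : ι → Set α)
    (hU : ∀ q : Ultrafilter α, ∃ i, U i ∈ q) : ∃ F : Finset ι, ⋃ i ∈ F, U i = Set.univ := by
  obtain ⟨F, hF⟩ := isCompact_univ.elim_finite_subcover (fun i => {q : Ultrafilter α | U i ∈ q})
    (fun i => ultrafilter_isOpen_basic (U i)) fun q _ => Set.mem_iUnion.2 (hU q)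
  refine ⟨F, Set.eq_univ_of_forall fun x => ?_⟩
  simpa using hF (Set.mem_univ (pure x))

section Convolution

variable {G : Type*} [Group G]

theorem mem_uconv (p q : Ultrafilter G) (s : Set G) :
    s ∈ uconv p q ↔ {g | {h | h * g ∈ s} ∈ p} ∈ q := by
  rw [uconv, ← Ultrafilter.mem_coe]
  show s ∈ Filter.bind (↑q) (fun g => ↑(p.map fun h => h * g)) ↔ _
  rw [Filter.mem_bind']
  rfl

theorem uconv_assoc (p q r : Ultrafilter G) :
    uconv (uconv p q) r = uconv p (uconv q r) := by
  ext s
  simp only [mem_uconv, Set.mem_ofPred_eq, mul_assoc]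

def IsRightIdeal (I : Set (Ultrafilter G)) : Prop :=
  ∀ q ∈ I, ∀ r, uconv q r ∈ I

def IsMinimalRightIdeal (I : Set (Ultrafilter G)) : Prop :=
  IsRightIdeal I ∧ ∀ J, J.Nonempty → J ⊆ I → IsRightIdeal J → J = I

theorem isRightIdeal_range_uconv (w : Ultrafilter G) : IsRightIdeal (Set.range (uconv w)) := by
  rintro _ ⟨r₀, rfl⟩ r
  exact ⟨uconv r₀ r, (uconv_assoc w r₀ r).symm⟩

theorem IsMinimalRightIdeal.exists_uconv_eq {I : Set (Ultrafilter G)} (hI : IsMinimalRightIdeal I)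
    {p w : Ultrafilter G} (hp : p ∈ I) (hw : w ∈ I) : ∃ r, uconv w r = p := by
  have hrange : Set.range (uconv w) = I :=
    hI.2 _ (Set.range_nonempty _) (Set.range_subset_iff.2 (hI.1 w hw)) (isRightIdeal_range_uconv w)
  rwa [← hrange] at hp

theorem IsMinimalRightIdeal.exists_finset_forall_mem {I : Set (Ultrafilter G)}
    (hI : IsMinimalRightIdeal I) {p : Ultrafilter G} (hp : p ∈ I) {A : Set G} (hA : A ∈ p) :
    ∃ F : Finset G, ∀ x, ∃ g ∈ F, {h | h * (x * g) ∈ A} ∈ p := by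
  have hcover : ∀ q : Ultrafilter G, ∃ g, {x | {h | h * (x * g) ∈ A} ∈ p} ∈ q := by
    intro q
    obtain ⟨r, hr⟩ := hI.exists_uconv_eq hp (hI.1 p hp q)
    rw [← hr, uconv_assoc, mem_uconv, mem_uconv] at hA
    obtain ⟨g, hg⟩ := Filter.nonempty_of_mem hA
    exact ⟨g, by simpa only [Set.mem_ofPred_eq, mul_assoc] using hg⟩
  obtain ⟨F, hF⟩ := Ultrafilter.exists_finset_iUnion_eq_univ _ hcover
  refine ⟨F, fun x => ?_⟩
  have hx : x ∈ ⋃ g ∈ F, {x | {h | h * (x * g) ∈ A} ∈ p} := hF ▸ Set.mem_univ x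
  obtain ⟨g, hgF, hg⟩ := Set.mem_iUnion₂.1 hx
  exact ⟨g, hgF, hg⟩

theorem exists_inv_mul_eq_of_mem {p : Ultrafilter G} {A : Set G} (hA : A ∈ p) {g : G}
    (hg : {h | h * g ∈ A} ∈ p) : ∃ a ∈ A, ∃ b ∈ A, a⁻¹ * b = g := by
  obtain ⟨a, ha, hag⟩ := Filter.nonempty_of_mem (Filter.inter_mem hA hg)
  exact ⟨a, ha, a * g, hag, inv_mul_cancel_left a g⟩

end Convolution

/-- If `p` is a minimal idempotent ultrafilter on `G` and `A ∈ p`, then `A⁻¹A` is right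
syndetic: there is a finite `F ⊆ G` with `(A⁻¹A)·F = G`. -/
theorem stmt_5 {G : Type*} [Group G] (p : Ultrafilter G) (hp : IsMinimalIdempotent p)
    (A : Set G) (hA : A ∈ p) :
    ∃ F : Finset G, ∀ x : G, ∃ f ∈ F, ∃ a ∈ A, ∃ b ∈ A, a⁻¹ * b * f = x := by
  classical
  obtain ⟨-, I, hpI, hI⟩ := hp
  obtain ⟨F, hF⟩ := IsMinimalRightIdeal.exists_finset_forall_mem hI hpI hA
  refine ⟨F.image (·⁻¹), fun x => ?_⟩
  obtain ⟨g, hgF, hg⟩ := hF x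
  obtain ⟨a, ha, b, hb, hab⟩ := exists_inv_mul_eq_of_mem hA hg
  exact ⟨g⁻¹, Finset.mem_image_of_mem _ hgF, a, ha, b, hb, by rw [hab, mul_inv_cancel_right]⟩
end

section
/- Let G be a unitary group action on a Hilbert space H. If f ∈ H has the property that 0 lies in the weak closure of the orbit {T^g f : g ∈ G}, then for any h ∈ H, the vector f ⊗ h ∈ H ⊗ H' has 0 in the weak closure of its orbit under the diagonal action g ↦ T^g ⊗ S^g, where S is any unitary G-action on H'. -/
/-!
Let `L` be the filter on `G` along which `T g f` tends weakly to `0`; `f` being a flight vector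
means `L ≠ ⊥`. The vectors `w` with `⟪U g (f ⊗ h), w⟫ → 0` along `L` form a subspace, closed
because the orbit of `f ⊗ h` is bounded. It contains every `a ⊗ b`, since
`⟪U g (f ⊗ h), a ⊗ b⟫ = ⟪T g f, a⟫ ⟪S g h, b⟫` with the first factor tending to `0` and the second
bounded by `‖h‖ ‖b‖`. By density it is everything, so `U g (f ⊗ h)` tends weakly to `0` along
the nontrivial filter `L`.
-/

open RealInnerProductSpace

/-- `f` is a flight vector for the action `U`: `0` lies in the weak closure of the orbit
`{U g f : g ∈ G}`. -/
def IsFlight {G H : Type*} [NormedAddCommGroup H] [InnerProductSpace ℝ H]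
    (U : G → H → H) (f : H) : Prop :=
  ∀ ε > (0 : ℝ), ∀ F : Finset H, ∃ g : G, ∀ w ∈ F, |⟪U g f, w⟫| < ε

open Filter Topology NNReal

section WeakNull

variable {ι E : Type*} [NormedAddCommGroup E] [InnerProductSpace ℝ E]

/-- The pullback under `x` of the filter of weak neighbourhoods of `0`. -/
def weakNullFilter (x : ι → E) : Filter ι :=
  ⨅ (p : Finset E × ℝ) (_ : 0 < p.2), 𝓟 {i | ∀ a ∈ p.1, |⟪x i, a⟫| < p.2}

theorem hasBasis_weakNullFilter (x : ι → E) :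
    (weakNullFilter x).HasBasis (fun p : Finset E × ℝ => 0 < p.2)
      (fun p => {i | ∀ a ∈ p.1, |⟪x i, a⟫| < p.2}) := by
  classical
  refine hasBasis_biInf_principal' (fun p hp q hq => ⟨(p.1 ∪ q.1, min p.2 q.2), lt_min hp hq,
    ?_, ?_⟩) ⟨(∅, 1), one_pos⟩
  · exact fun i hi a ha => (hi a (Finset.mem_union_left _ ha)).trans_le (min_le_left _ _)
  · exact fun i hi a ha => (hi a (Finset.mem_union_right _ ha)).trans_le (min_le_right _ _)

theorem le_weakNullFilter_iff {l : Filter ι} {x : ι → E} :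
    l ≤ weakNullFilter x ↔ ∀ a, Tendsto (fun i => ⟪x i, a⟫) l (𝓝 0) := by
  simp only [(hasBasis_weakNullFilter x).ge_iff, Metric.tendsto_nhds, Real.dist_0_eq_abs]
  constructor
  · intro hl a ε hε
    exact mem_of_superset (hl ({a}, ε) hε) fun i hi => hi a (Finset.mem_singleton_self a)
  · intro hl p hp
    exact (Finset.eventually_all p.1).2 fun a _ => hl a p.2 hp

theorem isFlight_iff_neBot_weakNullFilter {G : Type*} (U : G → E → E) (f : E) :
    IsFlight U f ↔ (weakNullFilter (fun g => U g f)).NeBot := by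
  rw [(hasBasis_weakNullFilter _).neBot_iff, Prod.forall]
  exact ⟨fun hf F ε hε => hf ε hε F, fun hf ε hε F => hf F ε hε⟩

def weakNullSubmodule (l : Filter ι) (x : ι → E) : Submodule ℝ E where
  carrier := {w | Tendsto (fun i => ⟪x i, w⟫) l (𝓝 0)}
  zero_mem' := by simpa using tendsto_const_nhds
  add_mem' hv hw := by
    simpa only [Set.mem_ofPred_eq, inner_add_right, add_zero] using hv.add hw
  smul_mem' c _ hw := by
    simpa only [Set.mem_ofPred_eq, real_inner_smul_right, mul_zero] using hw.const_mul c

@[simp]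
theorem mem_weakNullSubmodule {l : Filter ι} {x : ι → E} {w : E} :
    w ∈ weakNullSubmodule l x ↔ Tendsto (fun i => ⟪x i, w⟫) l (𝓝 0) :=
  Iff.rfl

theorem isClosed_weakNullSubmodule (l : Filter ι) {x : ι → E} {C : ℝ≥0} (hx : ∀ i, ‖x i‖ ≤ C) :
    IsClosed (weakNullSubmodule l x : Set E) := by
  have hlip : ∀ i, LipschitzWith C (fun w => ⟪x i, w⟫) := fun i =>
    (innerSL ℝ (x i)).lipschitz.weaken (by simpa [← NNReal.coe_le_coe] using hx i)
  exact (LipschitzWith.uniformEquicontinuous _ C hlip).equicontinuous.isClosed_setOfPred_tendsto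
    continuous_const

end WeakNull

theorem stmt_10_general {G H H' W : Type*}
    [NormedAddCommGroup H] [InnerProductSpace ℝ H]
    [NormedAddCommGroup H'] [InnerProductSpace ℝ H']
    [NormedAddCommGroup W] [InnerProductSpace ℝ W]
    (T : G → H ≃ₗᵢ[ℝ] H) (S : G → H' ≃ₗᵢ[ℝ] H') (U : G → W ≃ₗᵢ[ℝ] W)
    (tmul : H →ₗ[ℝ] H' →ₗ[ℝ] W)
    (htmul_inner : ∀ a c : H, ∀ b d : H', ⟪tmul a b, tmul c d⟫ = ⟪a, c⟫ * ⟪b, d⟫)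
    (hdense : Dense (↑(Submodule.span ℝ {w : W | ∃ a b, tmul a b = w}) : Set W))
    (hdiag : ∀ g a b, U g (tmul a b) = tmul (T g a) (S g b))
    (f : H) (hf : IsFlight (fun g x => T g x) f) (h : H') :
    IsFlight (fun g x => U g x) (tmul f h) := by
  set L := weakNullFilter fun g => T g f
  have hL : L.NeBot := (isFlight_iff_neBot_weakNullFilter _ f).1 hf
  have hspan : Submodule.span ℝ {w : W | ∃ a b, tmul a b = w} ≤
      weakNullSubmodule L fun g => U g (tmul f h) := by
    rw [Submodule.span_le]
    rintro _ ⟨a, b, rfl⟩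
    rw [SetLike.mem_coe, mem_weakNullSubmodule]
    simp only [hdiag, htmul_inner]
    refine (le_weakNullFilter_iff.1 le_rfl a).zero_mul_isBoundedUnder_le
      (isBoundedUnder_of ⟨‖h‖ * ‖b‖, fun g => ?_⟩)
    simpa only [Function.comp_apply, Real.norm_eq_abs, (S g).norm_map] using
      abs_real_inner_le_norm (S g h) b
  have hclosed := isClosed_weakNullSubmodule L (C := ‖tmul f h‖₊) fun g => ((U g).norm_map _).le
  have hall (w : W) : w ∈ weakNullSubmodule L fun g => U g (tmul f h) :=
    closure_minimal hspan hclosed (hdense w)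
  rw [isFlight_iff_neBot_weakNullFilter]
  exact hL.mono (le_weakNullFilter_iff.2 hall)

/-- If `0` is in the weak closure of the orbit of `f` under the unitary action `T`, then
for any `h`, the elementary tensor `f ⊗ h` is a flight vector for the diagonal action
`g ↦ T^g ⊗ S^g` on the Hilbert tensor product (modelled abstractly by a bilinear map
`tmul` with `⟪a⊗b, c⊗d⟫ = ⟪a,c⟫⟪b,d⟫` and dense span of elementary tensors). -/
theorem stmt_10 {G H H' W : Type*} [Group G]
    [NormedAddCommGroup H] [InnerProductSpace ℝ H]
    [NormedAddCommGroup H'] [InnerProductSpace ℝ H']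
    [NormedAddCommGroup W] [InnerProductSpace ℝ W]
    (T : G → H ≃ₗᵢ[ℝ] H) (S : G → H' ≃ₗᵢ[ℝ] H') (U : G → W ≃ₗᵢ[ℝ] W)
    (hT : ∀ g₁ g₂ x, T (g₁ * g₂) x = T g₁ (T g₂ x))
    (hS : ∀ g₁ g₂ x, S (g₁ * g₂) x = S g₁ (S g₂ x))
    (hU : ∀ g₁ g₂ x, U (g₁ * g₂) x = U g₁ (U g₂ x))
    (tmul : H →ₗ[ℝ] H' →ₗ[ℝ] W)
    (htmul_inner : ∀ a c : H, ∀ b d : H', ⟪tmul a b, tmul c d⟫ = ⟪a, c⟫ * ⟪b, d⟫)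
    (hdense : Dense (↑(Submodule.span ℝ {w : W | ∃ a b, tmul a b = w}) : Set W))
    (hdiag : ∀ g a b, U g (tmul a b) = tmul (T g a) (S g b))
    (f : H) (hf : IsFlight (fun g x => T g x) f) (h : H') :
    IsFlight (fun g x => U g x) (tmul f h) :=
  stmt_10_general T S U tmul htmul_inner hdense hdiag f hf h
end

section
/- Let G be a countable group with two commuting measure-preserving actions T₁, T₂ on a probability space (X, μ), such that the σ-algebras A₁, A₂, A₁₂ of T₁-, T₂-, and T₁T₂-invariant sets are jointly independent. Then for bounded measurable h₀ measurable w.r.t. A₁ ∨ A₁₂, h₁ = h₁,₁·h₁,₂ with h₁,ᵢ measurable w.r.t. Aᵢ, and h₂ measurable w.r.t. A₁₂ ∨ A₂, the function g ↦ ∫ h₀ · T₁^g h₁ · T₁₂^g h₂ dμ is constant in g. -/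
open MeasureTheory

/-- The σ-algebra of strictly `T`-invariant measurable sets. -/
def invariantAlg {G X : Type*} (m0 : MeasurableSpace X) (T : G → X → X) :
    MeasurableSpace X :=
  MeasurableSpace.generateFrom
    {s : Set X | MeasurableSet[m0] s ∧ ∀ g : G, T g ⁻¹' s = s}

section Aux

variable {G X : Type*} {m0 : MeasurableSpace X} {T : G → X → X}

lemma measurableSet_invariantAlg {s : Set X}
    (hs : MeasurableSet[m0] s) (hinv : ∀ g, T g ⁻¹' s = s) :
    MeasurableSet[invariantAlg m0 T] s :=
  MeasurableSpace.measurableSet_generateFrom ⟨hs, hinv⟩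

lemma invariantAlg_spec {s : Set X} (hs : MeasurableSet[invariantAlg m0 T] s) :
    MeasurableSet[m0] s ∧ ∀ g, T g ⁻¹' s = s := by
  induction s, hs using MeasurableSpace.generateFrom_induction with
  | hC t ht _ => exact ht
  | empty => exact ⟨MeasurableSet.empty, fun g => by simp⟩
  | compl t ht iht =>
      exact ⟨iht.1.compl, fun g => by rw [Set.preimage_compl, iht.2 g]⟩
  | iUnion f hf ihf =>
      exact ⟨MeasurableSet.iUnion fun i => (ihf i).1,
        fun g => by simp only [Set.preimage_iUnion, fun i => (ihf i).2 g]⟩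

lemma invariantAlg_le : invariantAlg m0 T ≤ m0 :=
  MeasurableSpace.generateFrom_le fun _ hs => hs.1

lemma apply_invariantAlg {f : X → ℝ} (hf : Measurable[invariantAlg m0 T] f)
    (g : G) (x : X) : f (T g x) = f x := by
  have hs : MeasurableSet[invariantAlg m0 T] (f ⁻¹' {f x}) :=
    hf (measurableSet_singleton _)
  have h := (invariantAlg_spec hs).2 g
  have hx : x ∈ f ⁻¹' {f x} := rfl
  rw [← h] at hx
  exact hx

lemma sup_eq_generateFrom_inter (m1 m2 : MeasurableSpace X) :
    m1 ⊔ m2 = MeasurableSpace.generateFrom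
      {s : Set X | ∃ t u, MeasurableSet[m1] t ∧ MeasurableSet[m2] u ∧ s = t ∩ u} := by
  refine le_antisymm (sup_le ?_ ?_) (MeasurableSpace.generateFrom_le ?_)
  · intro s hs
    exact MeasurableSpace.measurableSet_generateFrom
      ⟨s, Set.univ, hs, MeasurableSet.univ, (Set.inter_univ s).symm⟩
  · intro s hs
    exact MeasurableSpace.measurableSet_generateFrom
      ⟨Set.univ, s, MeasurableSet.univ, hs, (Set.univ_inter s).symm⟩
  · rintro s ⟨t, u, ht, hu, rfl⟩
    exact ((le_sup_left : m1 ≤ m1 ⊔ m2) t ht).inter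
      ((le_sup_right : m2 ≤ m1 ⊔ m2) u hu)

lemma isPiSystem_inter_alg (m1 m2 : MeasurableSpace X) :
    IsPiSystem {s : Set X | ∃ t u, MeasurableSet[m1] t ∧ MeasurableSet[m2] u ∧ s = t ∩ u} := by
  rintro s ⟨t, u, ht, hu, rfl⟩ s' ⟨t', u', ht', hu', rfl⟩ _
  exact ⟨t ∩ t', u ∩ u', ht.inter ht', hu.inter hu', by rw [Set.inter_inter_inter_comm]⟩

lemma integral_indicator_mul3 {μ : Measure X} (a b c : Set X)
    (ha : MeasurableSet[m0] a) (hb : MeasurableSet[m0] b) (hc : MeasurableSet[m0] c) :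
    ∫ x, a.indicator (1 : X → ℝ) x * b.indicator 1 x * c.indicator 1 x ∂μ
      = (μ (a ∩ b ∩ c)).toReal := by
  have h : ∀ x, a.indicator (1 : X → ℝ) x * b.indicator 1 x * c.indicator 1 x
      = (a ∩ b ∩ c).indicator 1 x := by
    intro x
    by_cases h1 : x ∈ a <;> by_cases h2 : x ∈ b <;> by_cases h3 : x ∈ c <;>
      simp [Set.indicator_apply, h1, h2, h3]
  rw [show (fun x => a.indicator (1 : X → ℝ) x * b.indicator 1 x * c.indicator 1 x)
      = fun x => (a ∩ b ∩ c).indicator 1 x from funext h]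
  exact integral_indicator_one ((ha.inter hb).inter hc)

lemma indicator_measurable {m : MeasurableSpace X} {s : Set X}
    (hs : MeasurableSet[m] s) : Measurable[m] (s.indicator (1 : X → ℝ)) :=
  measurable_const.indicator hs

lemma abs_indicator_le_one (s : Set X) (x : X) : |s.indicator (1 : X → ℝ) x| ≤ 1 := by
  by_cases hx : x ∈ s <;> simp [Set.indicator_apply, hx]

end Aux

section Key

variable {G X : Type*} [m0 : MeasurableSpace X]

/-- Main lemma for nonnegative bounded functions. -/
lemma key_nonneg (μ : Measure X) [IsProbabilityMeasure μ] (T₁ T₂ : G → X → X)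
    (hT₁ : ∀ g, MeasurePreserving (T₁ g) μ μ) (hT₂ : ∀ g, MeasurePreserving (T₂ g) μ μ)
    (hcomm : ∀ g h x, T₁ g (T₂ h x) = T₂ h (T₁ g x))
    (hindep : ∀ f₁ f₂ f₁₂ : X → ℝ, ∀ C : ℝ,
      (∀ x, |f₁ x| ≤ C) → (∀ x, |f₂ x| ≤ C) → (∀ x, |f₁₂ x| ≤ C) →
      Measurable[invariantAlg m0 T₁] f₁ → Measurable[invariantAlg m0 T₂] f₂ →
      Measurable[invariantAlg m0 (fun g x => T₁ g (T₂ g x))] f₁₂ →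
      ∫ x, f₁ x * f₂ x * f₁₂ x ∂μ
        = (∫ x, f₁ x ∂μ) * (∫ x, f₂ x ∂μ) * (∫ x, f₁₂ x ∂μ))
    (F K : X → ℝ) (D : ℝ)
    (hF0 : ∀ x, 0 ≤ F x) (hK0 : ∀ x, 0 ≤ K x)
    (hFb : ∀ x, F x ≤ D) (hKb : ∀ x, K x ≤ D)
    (hmF : Measurable[invariantAlg m0 T₁ ⊔
      invariantAlg m0 (fun g x => T₁ g (T₂ g x))] F)
    (hmK : Measurable[invariantAlg m0 (fun g x => T₁ g (T₂ g x)) ⊔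
      invariantAlg m0 T₂] K)
    (g g' : G) :
    ∫ x, F x * K (T₁ g (T₂ g x)) ∂μ = ∫ x, F x * K (T₁ g' (T₂ g' x)) ∂μ := by
  set S : G → X → X := fun g x => T₁ g (T₂ g x) with hSdef
  have hS : ∀ g, MeasurePreserving (S g) μ μ := fun g => (hT₁ g).comp (hT₂ g)
  have hmeasS : ∀ g, Measurable (S g) := fun g => (hS g).measurable
  have hle1 : invariantAlg m0 T₁ ≤ m0 := invariantAlg_le
  have hle2 : invariantAlg m0 T₂ ≤ m0 := invariantAlg_le
  have hle12 : invariantAlg m0 S ≤ m0 := invariantAlg_le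
  have hmFle : invariantAlg m0 T₁ ⊔ invariantAlg m0 S ≤ m0 := sup_le hle1 hle12
  have hmKle : invariantAlg m0 S ⊔ invariantAlg m0 T₂ ≤ m0 := sup_le hle12 hle2
  have hmF' : Measurable[m0] F := hmF.mono hmFle le_rfl
  have hmK' : Measurable[m0] K := hmK.mono hmKle le_rfl
  -- preimage facts
  have hpre2 : ∀ (g : G) (u : Set X), MeasurableSet[invariantAlg m0 T₂] u →
      MeasurableSet[invariantAlg m0 T₂] (T₁ g ⁻¹' u) := by
    intro g u hu
    refine measurableSet_invariantAlg ((hT₁ g).measurable (hle2 _ hu)) ?_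
    intro h
    have h1 : T₂ h ⁻¹' (T₁ g ⁻¹' u) = T₁ g ⁻¹' (T₂ h ⁻¹' u) := by
      ext x; simp [Set.mem_preimage, hcomm]
    rw [h1, (invariantAlg_spec hu).2 h]
  have hpreS2 : ∀ (g : G) (u : Set X), MeasurableSet[invariantAlg m0 T₂] u →
      S g ⁻¹' u = T₁ g ⁻¹' u := by
    intro g u hu
    have h1 : S g ⁻¹' u = T₂ g ⁻¹' (T₁ g ⁻¹' u) := by
      ext x; simp [hSdef, Set.mem_preimage, hcomm]
    rw [h1]
    exact (invariantAlg_spec (hpre2 g u hu)).2 g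
  -- Claim A : inner constancy
  have claimA : ∀ (g g' : G) (s₁ t₁₂ : Set X),
      MeasurableSet[invariantAlg m0 T₁] s₁ → MeasurableSet[invariantAlg m0 S] t₁₂ →
      ∫ x in s₁ ∩ t₁₂, K (S g x) ∂μ = ∫ x in s₁ ∩ t₁₂, K (S g' x) ∂μ := by
    intro g g' s₁ t₁₂ hs₁ ht₁₂
    have hs₁0 : MeasurableSet[m0] s₁ := hle1 _ hs₁
    have ht₁₂0 : MeasurableSet[m0] t₁₂ := hle12 _ ht₁₂
    set ν : G → Measure X := fun g => (μ.restrict (s₁ ∩ t₁₂)).map (S g) with hνdef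
    have hν_apply : ∀ (g : G) (u₁₂ u₂ : Set X),
        MeasurableSet[invariantAlg m0 S] u₁₂ → MeasurableSet[invariantAlg m0 T₂] u₂ →
        ν g (u₁₂ ∩ u₂)
          = μ (s₁ ∩ (T₁ g ⁻¹' u₂) ∩ (t₁₂ ∩ u₁₂)) := by
      intro g u₁₂ u₂ hu₁₂ hu₂
      have hu₁₂0 : MeasurableSet[m0] u₁₂ := hle12 _ hu₁₂
      have hu₂0 : MeasurableSet[m0] u₂ := hle2 _ hu₂
      rw [hνdef]
      rw [Measure.map_apply (hmeasS g) (hu₁₂0.inter hu₂0)]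
      rw [Set.preimage_inter, (invariantAlg_spec hu₁₂).2 g, hpreS2 g u₂ hu₂]
      rw [Measure.restrict_apply (hu₁₂0.inter ((hT₁ g).measurable hu₂0))]
      congr 1
      ext x
      simp only [Set.mem_inter_iff, Set.mem_preimage]
      tauto
    have hν_const : ∀ (g : G) (u₁₂ u₂ : Set X),
        MeasurableSet[invariantAlg m0 S] u₁₂ → MeasurableSet[invariantAlg m0 T₂] u₂ →
        ν g (u₁₂ ∩ u₂)
          = ENNReal.ofReal ((μ s₁).toReal * (μ u₂).toReal * (μ (t₁₂ ∩ u₁₂)).toReal) := by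
      intro g u₁₂ u₂ hu₁₂ hu₂
      rw [hν_apply g u₁₂ u₂ hu₁₂ hu₂]
      have hu₂0 : MeasurableSet[m0] u₂ := hle2 _ hu₂
      have hu₁₂0 : MeasurableSet[m0] u₁₂ := hle12 _ hu₁₂
      have hA0 : MeasurableSet[m0] (T₁ g ⁻¹' u₂) := (hT₁ g).measurable hu₂0
      have hind := hindep (s₁.indicator 1) ((T₁ g ⁻¹' u₂).indicator 1)
        ((t₁₂ ∩ u₁₂).indicator 1) 1
        (abs_indicator_le_one _) (abs_indicator_le_one _) (abs_indicator_le_one _)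
        (indicator_measurable hs₁)
        (indicator_measurable (hpre2 g u₂ hu₂))
        (indicator_measurable (ht₁₂.inter hu₁₂))
      rw [integral_indicator_mul3 _ _ _ hs₁0 hA0 (ht₁₂0.inter hu₁₂0)] at hind
      rw [integral_indicator_one hs₁0, integral_indicator_one hA0,
        integral_indicator_one (ht₁₂0.inter hu₁₂0)] at hind
      simp only [Measure.real] at hind
      rw [(hT₁ g).measure_preimage hu₂0.nullMeasurableSet] at hind
      rw [← hind, ENNReal.ofReal_toReal (measure_ne_top μ _)]
    have hfin : ∀ g : G, IsFiniteMeasure (ν g) := by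
      intro g
      constructor
      rw [hνdef, Measure.map_apply (hmeasS g) MeasurableSet.univ]
      exact lt_of_le_of_lt (measure_mono (Set.subset_univ _)) (measure_lt_top _ _)
    have htrim : (ν g).trim hmKle = (ν g').trim hmKle := by
      have hgen : (invariantAlg m0 S ⊔ invariantAlg m0 T₂ : MeasurableSpace X)
          = MeasurableSpace.generateFrom
            {s : Set X | ∃ t u, MeasurableSet[invariantAlg m0 S] t ∧
              MeasurableSet[invariantAlg m0 T₂] u ∧ s = t ∩ u} :=
        sup_eq_generateFrom_inter _ _
      haveI := hfin g
      haveI := hfin g'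
      haveI := isFiniteMeasure_trim hmKle (μ := ν g)
      refine @ext_of_generate_finite X
        (invariantAlg m0 S ⊔ invariantAlg m0 T₂)
        ((ν g).trim hmKle) ((ν g').trim hmKle) _ hgen
        (isPiSystem_inter_alg _ _) _ ?_ ?_
      · rintro s ⟨t, u, ht, hu, rfl⟩
        have hsm : MeasurableSet[invariantAlg m0 S ⊔ invariantAlg m0 T₂] (t ∩ u) :=
          ((le_sup_left : invariantAlg m0 S ≤ _) t ht).inter
            ((le_sup_right : invariantAlg m0 T₂ ≤ _) u hu)
        rw [trim_measurableSet_eq hmKle hsm, trim_measurableSet_eq hmKle hsm,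
          hν_const g t u ht hu, hν_const g' t u ht hu]
      · have huniv : MeasurableSet[invariantAlg m0 S ⊔ invariantAlg m0 T₂]
            (Set.univ : Set X) := MeasurableSet.univ
        rw [trim_measurableSet_eq hmKle huniv, trim_measurableSet_eq hmKle huniv]
        have h1 : (Set.univ : Set X) = Set.univ ∩ Set.univ := by simp
        rw [h1, hν_const g Set.univ Set.univ
            (measurableSet_invariantAlg MeasurableSet.univ fun _ => by simp)
            (measurableSet_invariantAlg MeasurableSet.univ fun _ => by simp),
          hν_const g' Set.univ Set.univ
            (measurableSet_invariantAlg MeasurableSet.univ fun _ => by simp)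
            (measurableSet_invariantAlg MeasurableSet.univ fun _ => by simp)]
    have hchain : ∀ g : G, ∫ x in s₁ ∩ t₁₂, K (S g x) ∂μ
        = ∫ y, K y ∂((ν g).trim hmKle) := by
      intro g
      rw [hνdef]
      rw [← integral_map (hmeasS g).aemeasurable hmK'.aestronglyMeasurable]
      exact integral_trim hmKle hmK.stronglyMeasurable
    rw [hchain g, hchain g', htrim]
  -- Outer step
  have hKS0 : ∀ (g : G) (x : X), 0 ≤ K (S g x) := fun g x => hK0 _
  set w : G → Measure X := fun g =>
    μ.withDensity (fun x => ((K (S g x)).toNNReal : ENNReal)) with hwdef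
  have hmKS : ∀ g : G, Measurable fun x => K (S g x) :=
    fun g => hmK'.comp (hmeasS g)
  have hintKS : ∀ (g : G) (s : Set X), Integrable (fun x => K (S g x)) (μ.restrict s) := by
    intro g s
    refine ⟨(hmKS g).aestronglyMeasurable, ?_⟩
    exact HasFiniteIntegral.of_bounded (C := D)
      (Filter.Eventually.of_forall fun x => by
        rw [Real.norm_eq_abs, abs_of_nonneg (hK0 _)]; exact hKb _)
  have hw_apply : ∀ (g : G) (s : Set X), MeasurableSet[m0] s →
      w g s = ENNReal.ofReal (∫ x in s, K (S g x) ∂μ) := by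
    intro g s hs
    rw [hwdef]
    rw [withDensity_apply _ hs]
    rw [ofReal_integral_eq_lintegral_ofReal (hintKS g s)
      (Filter.Eventually.of_forall fun x => hKS0 g x)]
    rfl
  have hwfin : ∀ g : G, IsFiniteMeasure (w g) := by
    intro g
    constructor
    rw [hw_apply g Set.univ MeasurableSet.univ]
    exact ENNReal.ofReal_lt_top
  have hwtrim : (w g).trim hmFle = (w g').trim hmFle := by
    have hgen : (invariantAlg m0 T₁ ⊔ invariantAlg m0 S : MeasurableSpace X)
        = MeasurableSpace.generateFrom
          {s : Set X | ∃ t u, MeasurableSet[invariantAlg m0 T₁] t ∧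
            MeasurableSet[invariantAlg m0 S] u ∧ s = t ∩ u} :=
      sup_eq_generateFrom_inter _ _
    haveI := hwfin g
    haveI := hwfin g'
    haveI := isFiniteMeasure_trim hmFle (μ := w g)
    refine @ext_of_generate_finite X
      (invariantAlg m0 T₁ ⊔ invariantAlg m0 S)
      ((w g).trim hmFle) ((w g').trim hmFle) _ hgen
      (isPiSystem_inter_alg _ _) _ ?_ ?_
    · rintro s ⟨t, u, ht, hu, rfl⟩
      have hsm : MeasurableSet[invariantAlg m0 T₁ ⊔ invariantAlg m0 S] (t ∩ u) :=
        ((le_sup_left : invariantAlg m0 T₁ ≤ _) t ht).inter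
          ((le_sup_right : invariantAlg m0 S ≤ _) u hu)
      have hsm0 : MeasurableSet[m0] (t ∩ u) := hmFle _ hsm
      rw [trim_measurableSet_eq hmFle hsm, trim_measurableSet_eq hmFle hsm,
        hw_apply g _ hsm0, hw_apply g' _ hsm0, claimA g g' t u ht hu]
    · have huniv : MeasurableSet[invariantAlg m0 T₁ ⊔ invariantAlg m0 S]
          (Set.univ : Set X) := MeasurableSet.univ
      have hu1 : MeasurableSet[invariantAlg m0 T₁] (Set.univ : Set X) :=
        measurableSet_invariantAlg MeasurableSet.univ fun _ => by simp
      have hu12 : MeasurableSet[invariantAlg m0 S] (Set.univ : Set X) :=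
        measurableSet_invariantAlg MeasurableSet.univ fun _ => by simp
      rw [trim_measurableSet_eq hmFle huniv, trim_measurableSet_eq hmFle huniv,
        hw_apply g _ MeasurableSet.univ, hw_apply g' _ MeasurableSet.univ]
      have h1 : (Set.univ : Set X) = Set.univ ∩ Set.univ := by simp
      congr 1
      rw [h1]
      exact claimA g g' Set.univ Set.univ hu1 hu12
  have hchain2 : ∀ g : G, ∫ x, F x * K (S g x) ∂μ = ∫ y, F y ∂((w g).trim hmFle) := by
    intro g
    have h1 : ∫ y, F y ∂(w g)
        = ∫ x, (K (S g x)).toNNReal • F x ∂μ := by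
      rw [hwdef]
      exact integral_withDensity_eq_integral_smul ((hmKS g).real_toNNReal) F
    have h2 : ∀ x, (K (S g x)).toNNReal • F x = F x * K (S g x) := by
      intro x
      rw [NNReal.smul_def, Real.coe_toNNReal _ (hKS0 g x), smul_eq_mul, mul_comm]
    rw [show (fun x => (K (S g x)).toNNReal • F x) = fun x => F x * K (S g x)
      from funext h2] at h1
    rw [← h1]
    exact integral_trim hmFle hmF.stronglyMeasurable
  rw [hchain2 g, hchain2 g', hwtrim]

/-- Main lemma for bounded (not necessarily nonnegative) functions. -/
lemma key (μ : Measure X) [IsProbabilityMeasure μ] (T₁ T₂ : G → X → X)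
    (hT₁ : ∀ g, MeasurePreserving (T₁ g) μ μ) (hT₂ : ∀ g, MeasurePreserving (T₂ g) μ μ)
    (hcomm : ∀ g h x, T₁ g (T₂ h x) = T₂ h (T₁ g x))
    (hindep : ∀ f₁ f₂ f₁₂ : X → ℝ, ∀ C : ℝ,
      (∀ x, |f₁ x| ≤ C) → (∀ x, |f₂ x| ≤ C) → (∀ x, |f₁₂ x| ≤ C) →
      Measurable[invariantAlg m0 T₁] f₁ → Measurable[invariantAlg m0 T₂] f₂ →
      Measurable[invariantAlg m0 (fun g x => T₁ g (T₂ g x))] f₁₂ →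
      ∫ x, f₁ x * f₂ x * f₁₂ x ∂μ
        = (∫ x, f₁ x ∂μ) * (∫ x, f₂ x ∂μ) * (∫ x, f₁₂ x ∂μ))
    (F K : X → ℝ) (D : ℝ)
    (hFb : ∀ x, |F x| ≤ D) (hKb : ∀ x, |K x| ≤ D)
    (hmF : Measurable[invariantAlg m0 T₁ ⊔
      invariantAlg m0 (fun g x => T₁ g (T₂ g x))] F)
    (hmK : Measurable[invariantAlg m0 (fun g x => T₁ g (T₂ g x)) ⊔
      invariantAlg m0 T₂] K)
    (g g' : G) :
    ∫ x, F x * K (T₁ g (T₂ g x)) ∂μ = ∫ x, F x * K (T₁ g' (T₂ g' x)) ∂μ := by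
  have hS : ∀ g, MeasurePreserving (fun x => T₁ g (T₂ g x)) μ μ :=
    fun g => (hT₁ g).comp (hT₂ g)
  have hle1 : invariantAlg m0 T₁ ≤ m0 := invariantAlg_le
  have hle2 : invariantAlg m0 T₂ ≤ m0 := invariantAlg_le
  have hle12 : invariantAlg m0 (fun g x => T₁ g (T₂ g x)) ≤ m0 := invariantAlg_le
  have hmFle : invariantAlg m0 T₁ ⊔ invariantAlg m0 (fun g x => T₁ g (T₂ g x)) ≤ m0 :=
    sup_le hle1 hle12
  have hmKle : invariantAlg m0 (fun g x => T₁ g (T₂ g x)) ⊔ invariantAlg m0 T₂ ≤ m0 :=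
    sup_le hle12 hle2
  have hmF' : Measurable[m0] F := hmF.mono hmFle le_rfl
  have hmK' : Measurable[m0] K := hmK.mono hmKle le_rfl
  set F' : X → ℝ := fun x => F x + D with hF'def
  set K' : X → ℝ := fun x => K x + D with hK'def
  have hF'0 : ∀ x, 0 ≤ F' x := fun x => by
    have := (abs_le.mp (hFb x)).1; simp [hF'def]; linarith
  have hK'0 : ∀ x, 0 ≤ K' x := fun x => by
    have := (abs_le.mp (hKb x)).1; simp [hK'def]; linarith
  have hF'b : ∀ x, F' x ≤ 2 * D := fun x => by
    have := (abs_le.mp (hFb x)).2; simp [hF'def]; linarith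
  have hK'b : ∀ x, K' x ≤ 2 * D := fun x => by
    have := (abs_le.mp (hKb x)).2; simp [hK'def]; linarith
  have hmF2 : Measurable[invariantAlg m0 T₁ ⊔
      invariantAlg m0 (fun g x => T₁ g (T₂ g x))] F' := hmF.add measurable_const
  have hmK2 : Measurable[invariantAlg m0 (fun g x => T₁ g (T₂ g x)) ⊔
      invariantAlg m0 T₂] K' := hmK.add measurable_const
  have hmain := key_nonneg μ T₁ T₂ hT₁ hT₂ hcomm hindep F' K' (2 * D)
    hF'0 hK'0 hF'b hK'b hmF2 hmK2 g g'
  -- integrability facts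
  have hint : ∀ (f : X → ℝ), Measurable[m0] f → (∀ x, |f x| ≤ 2 * |D| + 2 * |D| * |D|) →
      Integrable f μ := by
    intro f hf hbf
    exact ⟨hf.aestronglyMeasurable,
      HasFiniteIntegral.of_bounded (C := 2 * |D| + 2 * |D| * |D|)
        (Filter.Eventually.of_forall fun x => by rw [Real.norm_eq_abs]; exact hbf x)⟩
  have hDabs : ∀ x : X, |F x| ≤ |D| := fun x => le_trans (hFb x) (le_abs_self D)
  have hKabs : ∀ x : X, |K x| ≤ |D| := fun x => le_trans (hKb x) (le_abs_self D)
  -- expand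
  have hexp : ∀ (h : G), ∫ x, F' x * K' (T₁ h (T₂ h x)) ∂μ
      = (∫ x, F x * K (T₁ h (T₂ h x)) ∂μ) + D * (∫ x, F x ∂μ)
        + D * (∫ x, K (T₁ h (T₂ h x)) ∂μ) + D * D := by
    intro h
    have hmKS : Measurable[m0] fun x => K (T₁ h (T₂ h x)) := hmK'.comp (hS h).measurable
    have h1 : Integrable (fun x => F x * K (T₁ h (T₂ h x))) μ := by
      refine hint _ (hmF'.mul hmKS) fun x => ?_
      rw [abs_mul]
      have : |F x| * |K (T₁ h (T₂ h x))| ≤ |D| * |D| :=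
        mul_le_mul (hDabs x) (hKabs _) (abs_nonneg _) (abs_nonneg _)
      nlinarith [abs_nonneg D]
    have h2 : Integrable (fun x => D * F x) μ := by
      refine hint _ (measurable_const.mul hmF') fun x => ?_
      rw [abs_mul]
      have := hDabs x
      nlinarith [abs_nonneg D, abs_nonneg (F x)]
    have h3 : Integrable (fun x => D * K (T₁ h (T₂ h x))) μ := by
      refine hint _ (measurable_const.mul hmKS) fun x => ?_
      rw [abs_mul]
      have := hKabs (T₁ h (T₂ h x))
      nlinarith [abs_nonneg D, abs_nonneg (K (T₁ h (T₂ h x)))]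
    have h4 : Integrable (fun _ : X => D * D) μ := integrable_const _
    have heq : (fun x => F' x * K' (T₁ h (T₂ h x)))
        = fun x => F x * K (T₁ h (T₂ h x)) + (D * F x + (D * K (T₁ h (T₂ h x)) + D * D)) := by
      funext x; simp [hF'def, hK'def]; ring
    have h34 : Integrable (fun x => D * K (T₁ h (T₂ h x)) + D * D) μ := h3.add h4
    have h234 : Integrable
        (fun x => D * F x + (D * K (T₁ h (T₂ h x)) + D * D)) μ := h2.add h34
    rw [heq, integral_add h1 h234, integral_add h2 h34, integral_add h3 h4,
      integral_const_mul, integral_const_mul, integral_const]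
    simp [measure_univ]
    ring
  have hKconst : ∀ h : G, ∫ x, K (T₁ h (T₂ h x)) ∂μ = ∫ x, K x ∂μ := by
    intro h
    have h1 : ∫ x, K (T₁ h (T₂ h x)) ∂μ
        = ∫ y, K y ∂(Measure.map (fun x => T₁ h (T₂ h x)) μ) :=
      (integral_map (hS h).measurable.aemeasurable hmK'.aestronglyMeasurable).symm
    rw [h1, (hS h).map_eq]
  rw [hexp g, hexp g', hKconst g, hKconst g'] at hmain
  linarith

end Key

/-- If the invariant σ-algebras `A₁, A₂, A₁₂` of two commuting measure-preserving actions
are jointly independent, then for bounded `h₀` measurable w.r.t. `A₁ ∨ A₁₂`,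
`h₁ = h₁,₁ · h₁,₂` with `h₁,ᵢ` measurable w.r.t. `Aᵢ`, and `h₂` measurable w.r.t.
`A₁₂ ∨ A₂`, the correlation `g ↦ ∫ h₀ · T₁^g h₁ · T₁₂^g h₂ dμ` is constant in `g`. -/
theorem stmt_16 {G X : Type*} [Group G] [Countable G] [m0 : MeasurableSpace X]
    (μ : Measure X) [IsProbabilityMeasure μ]
    (T₁ T₂ : G → X → X)
    (hT₁ : ∀ g, MeasurePreserving (T₁ g) μ μ) (hT₂ : ∀ g, MeasurePreserving (T₂ g) μ μ)
    (hT₁1 : ∀ x, T₁ 1 x = x) (hT₂1 : ∀ x, T₂ 1 x = x)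
    (hT₁mul : ∀ g h x, T₁ (g * h) x = T₁ g (T₁ h x))
    (hT₂mul : ∀ g h x, T₂ (g * h) x = T₂ g (T₂ h x))
    (hcomm : ∀ g h x, T₁ g (T₂ h x) = T₂ h (T₁ g x))
    -- joint independence of `A₁`, `A₂`, `A₁₂`
    (hindep : ∀ f₁ f₂ f₁₂ : X → ℝ, ∀ C : ℝ,
      (∀ x, |f₁ x| ≤ C) → (∀ x, |f₂ x| ≤ C) → (∀ x, |f₁₂ x| ≤ C) →
      Measurable[invariantAlg m0 T₁] f₁ → Measurable[invariantAlg m0 T₂] f₂ →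
      Measurable[invariantAlg m0 (fun g x => T₁ g (T₂ g x))] f₁₂ →
      ∫ x, f₁ x * f₂ x * f₁₂ x ∂μ
        = (∫ x, f₁ x ∂μ) * (∫ x, f₂ x ∂μ) * (∫ x, f₁₂ x ∂μ))
    (h₀ h₁₁ h₁₂ h₂ : X → ℝ) (C : ℝ)
    (hb₀ : ∀ x, |h₀ x| ≤ C) (hb₁₁ : ∀ x, |h₁₁ x| ≤ C) (hb₁₂ : ∀ x, |h₁₂ x| ≤ C)
    (hb₂ : ∀ x, |h₂ x| ≤ C)
    (hm₀ : Measurable[invariantAlg m0 T₁ ⊔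
      invariantAlg m0 (fun g x => T₁ g (T₂ g x))] h₀)
    (hm₁₁ : Measurable[invariantAlg m0 T₁] h₁₁)
    (hm₁₂ : Measurable[invariantAlg m0 T₂] h₁₂)
    (hm₂ : Measurable[invariantAlg m0 (fun g x => T₁ g (T₂ g x)) ⊔
      invariantAlg m0 T₂] h₂) :
    ∀ g g' : G,
      ∫ x, h₀ x * (h₁₁ (T₁ g x) * h₁₂ (T₁ g x)) * h₂ (T₁ g (T₂ g x)) ∂μ
        = ∫ x, h₀ x * (h₁₁ (T₁ g' x) * h₁₂ (T₁ g' x)) * h₂ (T₁ g' (T₂ g' x)) ∂μ := by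
  intro g g'
  have hinv₁₁ : ∀ (h : G) (x : X), h₁₁ (T₁ h x) = h₁₁ x := apply_invariantAlg hm₁₁
  have hinv₁₂ : ∀ (h : G) (x : X), h₁₂ (T₂ h x) = h₁₂ x := apply_invariantAlg hm₁₂
  have hrw : ∀ (h : G) (x : X),
      h₀ x * (h₁₁ (T₁ h x) * h₁₂ (T₁ h x)) * h₂ (T₁ h (T₂ h x))
        = (h₀ x * h₁₁ x) * (h₁₂ (T₁ h (T₂ h x)) * h₂ (T₁ h (T₂ h x))) := by
    intro h x
    rw [hinv₁₁ h x]
    have h12 : h₁₂ (T₁ h (T₂ h x)) = h₁₂ (T₁ h x) := by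
      rw [hcomm, hinv₁₂]
    rw [h12]
    ring
  simp_rw [hrw]
  exact key μ T₁ T₂ hT₁ hT₂ hcomm hindep
    (fun x => h₀ x * h₁₁ x) (fun x => h₁₂ x * h₂ x) (C * C)
    (fun x => by
      rw [abs_mul]
      exact mul_le_mul (hb₀ x) (hb₁₁ x) (abs_nonneg _) (le_trans (abs_nonneg _) (hb₀ x)))
    (fun x => by
      rw [abs_mul]
      exact mul_le_mul (hb₁₂ x) (hb₂ x) (abs_nonneg _) (le_trans (abs_nonneg _) (hb₁₂ x)))
    (hm₀.mul (hm₁₁.mono le_sup_left le_rfl))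
    ((hm₁₂.mono le_sup_right le_rfl).mul hm₂)
    g g'
end
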